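/- arXiv:0912.3948 — 2 statements merged into one kernel-verified Lean document; each statement's English description precedes it below -/
import Mathlib

section
/- The Fagnano orbit (medial triangle) is the shortest closed billiard trajectory in an equilateral triangle of side length s, and its length equals 3s/2. -/
/-!
A closed billiard trajectory meets all three sides, so its length is at least the perimeter
of a triangle `PQR` with `P ∈ [A, B]`, `Q ∈ [B, C]`, `R ∈ [C, A]`. The projections of `PQ`,
`QR`, `RP` onto the directions of `CA`, `AB`, `BC` always add up to `3s/2`, so such a perimeter
is at least `3s/2`. The medial triangle attains this bound; its sides are parallel to those of
`ABC`, so at each midpoint the reflection law reduces to the equality of two angles of `ABC`.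
-/

open Real EuclideanGeometry

/-- A closed billiard trajectory with `m` bounce points in the triangle with vertices
`A, B, C`: a cyclic sequence of points on the boundary, with consecutive points
distinct, satisfying the billiard reflection law (equal angles of incidence and
reflection) at every bounce point lying in the interior of a side. -/
structure ClosedBilliardTraj (A B C : EuclideanSpace ℝ (Fin 2)) (m : ℕ) [NeZero m] where
  /-- The cyclically indexed bounce points. -/
  p : ZMod m → EuclideanSpace ℝ (Fin 2)
  /-- Each bounce point lies on the boundary of the triangle. -/
  on_boundary : ∀ i, p i ∈ segment ℝ A B ∪ segment ℝ B C ∪ segment ℝ C A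
  /-- Consecutive bounce points are distinct. -/
  ne_consec : ∀ i, p i ≠ p (i + 1)
  /-- The law of reflection: at a bounce point interior to a side `[a, b]`, the angle of
  incidence equals the angle of reflection. -/
  reflect : ∀ i, ∀ a b : EuclideanSpace ℝ (Fin 2),
    ((a, b) = (A, B) ∨ (a, b) = (B, C) ∨ (a, b) = (C, A)) →
    p i ∈ segment ℝ a b → p i ≠ a → p i ≠ b →
    ∠ (p (i - 1)) (p i) a = ∠ (p (i + 1)) (p i) b

/-- The length of a closed billiard trajectory: the sum of the lengths of its
straight segments. -/
noncomputable def ClosedBilliardTraj.length {A B C : EuclideanSpace ℝ (Fin 2)} {m : ℕ}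
    [NeZero m] (T : ClosedBilliardTraj A B C m) : ℝ :=
  ∑ i : ZMod m, dist (T.p i) (T.p (i + 1))

open scoped RealInnerProductSpace

namespace EuclideanGeometry

variable {V P : Type*} [NormedAddCommGroup V] [InnerProductSpace ℝ V] [MetricSpace P]
  [NormedAddTorsor V P]

theorem angle_add_angle_eq_pi_of_sbtw_of_angle_eq {a q b x y : P} (h : Sbtw ℝ a q b)
    (hxy : ∠ x q a = ∠ y q b) : ∠ b q x + ∠ b q y = π := by
  rw [angle_comm b q x, angle_comm b q y, ← hxy, add_comm]
  exact angle_add_angle_eq_pi_of_angle_eq_pi x h.angle₁₂₃_eq_pi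

theorem angle_ne_angle_of_sbtw_of_wbtw {a q b x y : P} (h : Sbtw ℝ a q b)
    (hx : Wbtw ℝ b x q) (hxq : x ≠ q) (hy : Wbtw ℝ b y q) (hyq : y ≠ q) :
    ∠ x q a ≠ ∠ y q b := by
  rw [hx.symm.angle_eq_left a hxq, h.angle₃₂₁_eq_pi, hy.angle₂₃₁_eq_zero_of_ne hyq]
  exact pi_ne_zero

theorem wbtw_of_angle_eq_zero_of_dist_le {O x y : P} (h : ∠ x O y = 0) (hxy : x ≠ y)
    (hd : dist O y ≤ dist O x) : Wbtw ℝ O y x := by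
  rcases angle_eq_zero_iff_ne_and_wbtw.1 h with ⟨-, hxy'⟩ | ⟨-, hyx⟩
  · have := hxy'.dist_add_dist
    exact absurd (dist_le_zero.1 (by linarith)) hxy
  · exact hyx

theorem eq_of_wbtw_of_wbtw_of_not_collinear {A B C x : P} (h : ¬ Collinear ℝ {A, B, C})
    (hAB : Wbtw ℝ A x B) (hBC : Wbtw ℝ B x C) : x = B := by
  by_contra hx
  apply h
  apply collinear_of_angle_eq_zero
  rw [← hAB.symm.angle_eq_left C hx, ← hBC.angle_eq_right x hx, angle_self_of_ne hx]

/-- Summing the angle sums of the triangles `O (p i) (p (i + 1))`, the angles at the vertices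
`p i` add up to `m π`, so the angles at `O` add up to `0`. -/
theorem angle_eq_zero_of_angle_add_angle_eq_pi {m : ℕ} [NeZero m] {p : ZMod m → P} {O : P}
    (hne : ∀ i, p i ≠ p (i + 1))
    (hsupp : ∀ i, ∠ O (p i) (p (i - 1)) + ∠ O (p i) (p (i + 1)) = π) (i : ZMod m) :
    ∠ (p i) O (p (i + 1)) = 0 := by
  have htri : ∀ i,
      ∠ (p i) O (p (i + 1)) + ∠ O (p i) (p (i + 1)) + ∠ O (p (i + 1)) (p i) = π := by
    intro i
    have := angle_add_angle_add_angle_eq_pi O (hne i).symm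
    rw [angle_comm (p (i + 1)) O, angle_comm (p i) (p (i + 1))] at this
    linarith
  have hshift : ∑ i, ∠ O (p (i + 1)) (p i) = ∑ i, ∠ O (p i) (p (i - 1)) := by
    simpa using Equiv.sum_comp (Equiv.addRight (1 : ZMod m)) fun i => ∠ O (p i) (p (i - 1))
  have hsum : ∑ i, ∠ (p i) O (p (i + 1)) = 0 := by
    have h1 := Finset.sum_congr rfl fun i (_ : i ∈ Finset.univ) => htri i
    have h2 := Finset.sum_congr rfl fun i (_ : i ∈ Finset.univ) => hsupp i
    simp only [Finset.sum_add_distrib] at h1 h2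
    linarith
  exact (Finset.sum_eq_zero_iff_of_nonneg fun i _ => angle_nonneg _ _ _).1 hsum i
    (Finset.mem_univ i)

theorem angle_midpoint_midpoint_left (A B C : P) :
    ∠ (midpoint ℝ A C) (midpoint ℝ A B) A = ∠ C B A := by
  rw [angle, angle, midpoint_vsub_midpoint_same_left, left_vsub_midpoint,
    InnerProductGeometry.angle_smul_smul (by norm_num : (⅟2 : ℝ) ≠ 0)]

theorem dist_midpoint_midpoint_same_left (A B C : P) :
    dist (midpoint ℝ A B) (midpoint ℝ A C) = dist B C / 2 := by
  rw [dist_eq_norm_vsub V, midpoint_vsub_midpoint_same_left, norm_smul, ← dist_eq_norm_vsub V]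
  norm_num
  ring

theorem not_collinear_of_dist_eq {A B C : P} {s : ℝ} (hs : 0 < s) (hAB : dist A B = s)
    (hBC : dist B C = s) (hCA : dist C A = s) : ¬ Collinear ℝ {A, B, C} := fun h => by
  rcases h.wbtw_or_wbtw_or_wbtw with h | h | h <;>
    linarith [h.dist_add_dist, dist_comm A B, dist_comm B C, dist_comm C A]

end EuclideanGeometry

section Polygon

variable {α : Type*} [PseudoMetricSpace α]

theorem ZMod.sum_eq_sum_range {M : Type*} [AddCommMonoid M] {m : ℕ} [NeZero m]
    (f : ZMod m → M) : ∑ i, f i = ∑ j ∈ Finset.range m, f j :=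
  Finset.sum_nbij' ZMod.val Nat.cast (by simp [ZMod.val_lt]) (by simp) (by simp)
    (fun j hj => ZMod.val_cast_of_lt (Finset.mem_range.1 hj)) (by simp)

theorem dist_add_dist_add_dist_le_sum_dist {m : ℕ} [NeZero m] (p : ZMod m → α)
    (a b c : ZMod m) :
    dist (p a) (p b) + dist (p b) (p c) + dist (p c) (p a) ≤ ∑ i, dist (p i) (p (i + 1)) := by
  wlog hbc : (b - a).val ≤ (c - a).val generalizing b c
  · have := this c b (le_of_not_ge hbc)
    linarith [dist_comm (p a) (p b), dist_comm (p b) (p c), dist_comm (p c) (p a)]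
  set f : ℕ → α := fun j => p (a + j)
  have hf : ∀ k : ZMod m, f k.val = p (a + k) := by simp [f]
  have hlen : ∑ i, dist (p i) (p (i + 1)) = ∑ j ∈ Finset.range m, dist (f j) (f (j + 1)) := by
    rw [← Equiv.sum_comp (Equiv.addLeft a), ZMod.sum_eq_sum_range]
    simp [f, add_assoc]
  have hca : (c - a).val ≤ m := (ZMod.val_lt _).le
  rw [hlen, Finset.range_eq_Ico,
    ← Finset.sum_Ico_consecutive _ ((Nat.zero_le _).trans hbc) hca,
    ← Finset.sum_Ico_consecutive _ (Nat.zero_le _) hbc]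
  have h₁ := dist_le_Ico_sum_dist f (Nat.zero_le (b - a).val)
  have h₂ := dist_le_Ico_sum_dist f hbc
  have h₃ := dist_le_Ico_sum_dist f hca
  simp only [hf, f, Nat.cast_zero, add_zero, ZMod.natCast_self, add_sub_cancel] at h₁ h₂ h₃
  linarith

end Polygon

section InnerProductSpace

variable {V : Type*} [NormedAddCommGroup V] [InnerProductSpace ℝ V]

theorem three_mul_div_two_le_dist_add_dist_add_dist {A B C P Q R : V} {s : ℝ}
    (hAB : dist A B = s) (hBC : dist B C = s) (hCA : dist C A = s)
    (hP : P ∈ segment ℝ A B) (hQ : Q ∈ segment ℝ B C) (hR : R ∈ segment ℝ C A) :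
    3 * s / 2 ≤ dist P Q + dist Q R + dist R P := by
  have hproj : ∀ {X Y Z W : V}, dist X Y = s → ⟪X - Y, Z - W⟫ ≤ s * dist W Z :=
    fun {X Y Z W} h => by
      simpa [← dist_eq_norm, h, dist_comm] using real_inner_le_norm (X - Y) (Z - W)
  have hsum : ⟪C - A, Q - P⟫ + ⟪A - B, R - Q⟫ + ⟪B - C, P - R⟫ = 3 * s ^ 2 / 2 := by
    rw [segment_eq_image'] at hP hQ hR
    obtain ⟨t, -, rfl⟩ := hP
    obtain ⟨u, -, rfl⟩ := hQ
    obtain ⟨v, -, rfl⟩ := hR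
    have hxx : ⟪B - A, B - A⟫ = s ^ 2 := by
      rw [real_inner_self_eq_norm_sq, ← dist_eq_norm, dist_comm, hAB]
    have hyy : ⟪C - A, C - A⟫ = s ^ 2 := by
      rw [real_inner_self_eq_norm_sq, ← dist_eq_norm, hCA]
    have hxy : ⟪B - A, C - A⟫ = s ^ 2 / 2 := by
      have := norm_sub_sq_real (B - A) (C - A)
      rw [sub_sub_sub_cancel_right, ← dist_eq_norm, ← dist_eq_norm, ← dist_eq_norm, hBC,
        dist_comm, hAB, hCA] at this
      linarith
    rw [show B + u • (C - B) - (A + t • (B - A)) = (1 - u - t) • (B - A) + u • (C - A) by module,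
      show C + v • (A - C) - (B + u • (C - B)) = (u - 1) • (B - A) + (1 - u - v) • (C - A) by
        module,
      show A + t • (B - A) - (C + v • (A - C)) = t • (B - A) + (v - 1) • (C - A) by module,
      show A - B = -(B - A) by abel, show B - C = (B - A) - (C - A) by abel]
    generalize B - A = x at hxx hxy ⊢
    generalize C - A = y at hyy hxy ⊢
    simp only [inner_add_right, inner_smul_right, inner_neg_left, inner_sub_left,
      real_inner_comm x y]
    linear_combination (1 - u + t) * hxx + (u + 1 - v) * hyy + (2 * v - 2 * t - 1) * hxy
  have hL : s * (3 * s / 2) ≤ s * (dist P Q + dist Q R + dist R P) := by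
    linarith [hproj hCA (Z := Q) (W := P), hproj hAB (Z := R) (W := Q), hproj hBC (Z := P) (W := R)]
  rcases (hAB ▸ dist_nonneg : 0 ≤ s).eq_or_lt with rfl | hs
  · simp only [mul_zero, zero_div]
    positivity
  · exact le_of_mul_le_mul_left hL hs

theorem angle_midpoint_eq_of_mem_segment {A B C a b : V} (hABC : ¬ Collinear ℝ {A, B, C})
    (hiso : dist C A = dist C B) (hab : (a, b) = (A, B) ∨ (a, b) = (B, C) ∨ (a, b) = (C, A))
    (hmem : midpoint ℝ A B ∈ segment ℝ a b) (ha : midpoint ℝ A B ≠ a)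
    (hb : midpoint ℝ A B ≠ b) :
    ∠ (midpoint ℝ C A) (midpoint ℝ A B) a = ∠ (midpoint ℝ B C) (midpoint ℝ A B) b := by
  have hmid : Wbtw ℝ A (midpoint ℝ A B) B := mem_segment_iff_wbtw.1 (midpoint_mem_segment A B)
  rcases hab with h | h | h <;> obtain ⟨h₁, h₂⟩ := Prod.mk.inj h <;> subst a b
  · rw [midpoint_comm C A, angle_midpoint_midpoint_left, midpoint_comm A B,
      angle_midpoint_midpoint_left, angle_eq_angle_of_dist_eq hiso.symm]
  · exact absurd
      (eq_of_wbtw_of_wbtw_of_not_collinear hABC hmid (mem_segment_iff_wbtw.1 hmem)) ha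
  · have hCAB : ¬ Collinear ℝ {C, A, B} := by
      rwa [Set.insert_comm, Set.pair_comm]
    exact absurd
      (eq_of_wbtw_of_wbtw_of_not_collinear hCAB (mem_segment_iff_wbtw.1 hmem) hmid) hb

end InnerProductSpace

namespace ClosedBilliardTraj

variable {A B C : EuclideanSpace ℝ (Fin 2)} {m : ℕ} [NeZero m] (T : ClosedBilliardTraj A B C m)

def rotate : ClosedBilliardTraj B C A m where
  p := T.p
  on_boundary i := by
    rcases T.on_boundary i with (h | h) | h
    exacts [Or.inr h, Or.inl (Or.inl h), Or.inl (Or.inr h)]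
  ne_consec := T.ne_consec
  reflect i a b hab := T.reflect i a b (by tauto)

theorem angle_eq_of_sbtw {i : ZMod m} {a b : EuclideanSpace ℝ (Fin 2)}
    (hab : (a, b) = (A, B) ∨ (a, b) = (B, C) ∨ (a, b) = (C, A)) (h : Sbtw ℝ a (T.p i) b) :
    ∠ (T.p (i - 1)) (T.p i) a = ∠ (T.p (i + 1)) (T.p i) b :=
  T.reflect i a b hab (mem_segment_iff_wbtw.2 h.wbtw) h.ne_left h.ne_right

/-- If the trajectory missed `[C, A]`, the reflection law would make the two segments through
each bounce point form supplementary angles with the direction to `B`, so the trajectory would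
never turn around `B`. At its bounce point farthest from `B` it would then come from and return
towards `B`, which the reflection law forbids. -/
theorem exists_mem_third_side : ∃ i, T.p i ∈ segment ℝ C A := by
  by_contra! hCA
  have hside : ∀ i, T.p i = B ∨ Sbtw ℝ A (T.p i) B ∨ Sbtw ℝ B (T.p i) C := by
    intro i
    by_cases hB : T.p i = B
    · exact Or.inl hB
    have hA : T.p i ≠ A := fun h => hCA i (by rw [h]; exact right_mem_segment ℝ C A)
    have hC : T.p i ≠ C := fun h => hCA i (by rw [h]; exact left_mem_segment ℝ C A)
    rcases T.on_boundary i with (h | h) | h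
    · exact Or.inr (Or.inl ⟨mem_segment_iff_wbtw.1 h, hA, hB⟩)
    · exact Or.inr (Or.inr ⟨mem_segment_iff_wbtw.1 h, hB, hC⟩)
    · exact absurd h (hCA i)
  have hsupp : ∀ i, ∠ B (T.p i) (T.p (i - 1)) + ∠ B (T.p i) (T.p (i + 1)) = π := by
    intro i
    rcases hside i with hB | hAB | hBC
    · -- a bounce at the vertex fits because of the convention `∠ B B x = π / 2`
      rw [hB, angle_self_left, angle_self_left]
      ring
    · exact angle_add_angle_eq_pi_of_sbtw_of_angle_eq hAB (T.angle_eq_of_sbtw (by simp) hAB)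
    · rw [add_comm]
      exact angle_add_angle_eq_pi_of_sbtw_of_angle_eq hBC.symm
        (T.angle_eq_of_sbtw (by simp) hBC).symm
  have hzero := angle_eq_zero_of_angle_add_angle_eq_pi T.ne_consec hsupp
  obtain ⟨i, hi⟩ := Finite.exists_max fun i => dist B (T.p i)
  have hnext : Wbtw ℝ B (T.p (i + 1)) (T.p i) :=
    wbtw_of_angle_eq_zero_of_dist_le (hzero i) (T.ne_consec i) (hi _)
  have hprev : Wbtw ℝ B (T.p (i - 1)) (T.p i) := by
    have hne := T.ne_consec (i - 1)
    have hz := hzero (i - 1)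
    rw [sub_add_cancel] at hne hz
    exact wbtw_of_angle_eq_zero_of_dist_le (by rwa [angle_comm]) hne.symm (hi _)
  have hne_next : T.p (i + 1) ≠ T.p i := (T.ne_consec i).symm
  have hne_prev : T.p (i - 1) ≠ T.p i := by simpa using T.ne_consec (i - 1)
  rcases hside i with hB | hAB | hBC
  · have := hzero i
    rw [hB, angle_self_left] at this
    exact pi_div_two_pos.ne' this
  · exact angle_ne_angle_of_sbtw_of_wbtw hAB hprev hne_prev hnext hne_next
      (T.angle_eq_of_sbtw (by simp) hAB)
  · exact angle_ne_angle_of_sbtw_of_wbtw hBC.symm hnext hne_next hprev hne_prev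
      (T.angle_eq_of_sbtw (by simp) hBC).symm

theorem three_mul_div_two_le_length {s : ℝ} (hAB : dist A B = s) (hBC : dist B C = s)
    (hCA : dist C A = s) : 3 * s / 2 ≤ T.length := by
  obtain ⟨i, hi⟩ := T.rotate.exists_mem_third_side
  obtain ⟨j, hj⟩ := T.rotate.rotate.exists_mem_third_side
  obtain ⟨k, hk⟩ := T.exists_mem_third_side
  calc 3 * s / 2 ≤ dist (T.p i) (T.p j) + dist (T.p j) (T.p k) + dist (T.p k) (T.p i) :=
        three_mul_div_two_le_dist_add_dist_add_dist hAB hBC hCA hi hj hk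
    _ ≤ T.length := dist_add_dist_add_dist_le_sum_dist T.p i j k

theorem exists_medial_orbit {s : ℝ} (hs : 0 < s) (hAB : dist A B = s) (hBC : dist B C = s)
    (hCA : dist C A = s) :
    ∃ T : ClosedBilliardTraj A B C 3,
      T.p 0 = midpoint ℝ A B ∧ T.p 1 = midpoint ℝ B C ∧ T.p 2 = midpoint ℝ C A ∧
      T.length = 3 * s / 2 := by
  have h₀₁ : dist (midpoint ℝ A B) (midpoint ℝ B C) = s / 2 := by
    rw [midpoint_comm, dist_midpoint_midpoint_same_left, dist_comm, hCA]
  have h₁₂ : dist (midpoint ℝ B C) (midpoint ℝ C A) = s / 2 := by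
    rw [midpoint_comm, dist_midpoint_midpoint_same_left, dist_comm, hAB]
  have h₂₀ : dist (midpoint ℝ C A) (midpoint ℝ A B) = s / 2 := by
    rw [midpoint_comm, dist_midpoint_midpoint_same_left, dist_comm, hBC]
  have hpos : 0 < s / 2 := half_pos hs
  let p : ZMod 3 → EuclideanSpace ℝ (Fin 2) :=
    ![midpoint ℝ A B, midpoint ℝ B C, midpoint ℝ C A]
  refine ⟨⟨p, fun i => ?_, fun i => ?_, fun i a b hab => ?_⟩, rfl, rfl, rfl, ?_⟩
  · fin_cases i
    exacts [Or.inl (Or.inl (midpoint_mem_segment A B)),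
      Or.inl (Or.inr (midpoint_mem_segment B C)), Or.inr (midpoint_mem_segment C A)]
  · fin_cases i
    exacts [dist_pos.1 (h₀₁ ▸ hpos), dist_pos.1 (h₁₂ ▸ hpos), dist_pos.1 (h₂₀ ▸ hpos)]
  · fin_cases i
    · exact angle_midpoint_eq_of_mem_segment (not_collinear_of_dist_eq hs hAB hBC hCA)
        (by rw [hCA, dist_comm, hBC]) hab
    · exact angle_midpoint_eq_of_mem_segment (not_collinear_of_dist_eq hs hBC hCA hAB)
        (by rw [hAB, dist_comm, hCA]) (by tauto)
    · exact angle_midpoint_eq_of_mem_segment (not_collinear_of_dist_eq hs hCA hAB hBC)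
        (by rw [hBC, dist_comm, hAB]) (by tauto)
  · rw [length, show (Finset.univ : Finset (ZMod 3)) = {0, 1, 2} from rfl,
      Finset.sum_insert (by decide), Finset.sum_pair (by decide)]
    change dist (midpoint ℝ A B) (midpoint ℝ B C) + (dist (midpoint ℝ B C) (midpoint ℝ C A) +
      dist (midpoint ℝ C A) (midpoint ℝ A B)) = 3 * s / 2
    rw [h₀₁, h₁₂, h₂₀]
    ring

end ClosedBilliardTraj

/-- **The Fagnano orbit is the shortest closed billiard trajectory in an equilateral
triangle.**  In an equilateral triangle of side length `s > 0`, the inscribed medial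
triangle joining the midpoints of the three sides is a closed billiard trajectory of
length `3s/2`, and every closed billiard trajectory has length at least `3s/2`. -/
theorem fagnano_orbit_shortest (A B C : EuclideanSpace ℝ (Fin 2)) (s : ℝ) (hs : 0 < s)
    (hAB : dist A B = s) (hBC : dist B C = s) (hCA : dist C A = s) :
    (∃ T : ClosedBilliardTraj A B C 3,
      T.p 0 = midpoint ℝ A B ∧ T.p 1 = midpoint ℝ B C ∧ T.p 2 = midpoint ℝ C A ∧
      T.length = 3 * s / 2) ∧
    (∀ (m : ℕ) [NeZero m] (T : ClosedBilliardTraj A B C m), 3 * s / 2 ≤ T.length) :=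
  ⟨ClosedBilliardTraj.exists_medial_orbit hs hAB hBC hCA,
    fun _ _ T => T.three_mul_div_two_le_length hAB hBC hCA⟩
end

section
/- The intersection of the boundary of the Koch snowflake with (the boundary of) the initial equilateral triangle Δ is the union of three homeomorphic copies of the middle-third Cantor set, one on each side of Δ; in particular, on each unit side of Δ, the set of boundary points of KS lying on that side is exactly the standard middle-third Cantor set of that segment. -/
open Real

/-- The tip of the outward equilateral bump erected on the middle third of the oriented
segment from `p` to `q` (with the enclosed region on the left of `p → q`, the bump
points outward, to the right). -/
noncomputable def kochTip (p q : ℝ × ℝ) : ℝ × ℝ :=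
  midpoint ℝ p q + (Real.sqrt 3 / 6) • ((q - p).2, -(q - p).1)

/-- The Koch substitution on an oriented edge `(p, q)`: the edge is replaced by four
edges of one third the length, the open middle third being replaced by the two outer
sides of the outward equilateral triangle erected on it. -/
noncomputable def kochStep (e : (ℝ × ℝ) × (ℝ × ℝ)) : List ((ℝ × ℝ) × (ℝ × ℝ)) :=
  [(e.1, e.1 + (3 : ℝ)⁻¹ • (e.2 - e.1)),
   (e.1 + (3 : ℝ)⁻¹ • (e.2 - e.1), kochTip e.1 e.2),
   (kochTip e.1 e.2, e.1 + (2 / 3 : ℝ) • (e.2 - e.1)),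
   (e.1 + (2 / 3 : ℝ) • (e.2 - e.1), e.2)]

/-- The list of oriented boundary edges of the `n`-th Koch snowflake prefractal `KS_n`,
starting from the unit equilateral triangle with vertices `(0,0)`, `(1,0)`,
`(1/2, √3/2)` listed counterclockwise. -/
noncomputable def kochEdges : ℕ → List ((ℝ × ℝ) × (ℝ × ℝ))
  | 0 => [(((0 : ℝ), (0 : ℝ)), ((1 : ℝ), (0 : ℝ))),
          (((1 : ℝ), (0 : ℝ)), ((1 / 2 : ℝ), Real.sqrt 3 / 2)),
          (((1 / 2 : ℝ), Real.sqrt 3 / 2), ((0 : ℝ), (0 : ℝ)))]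
  | n + 1 => (kochEdges n).flatMap kochStep

/-- The set of all vertices of all prefractal approximations `KS_n`, `n ≥ 0`. -/
noncomputable def kochVertices : Set (ℝ × ℝ) :=
  {x | ∃ n : ℕ, ∃ e ∈ kochEdges n, x = e.1}

/-- The Koch snowflake curve `∂(KS)`, the Hausdorff-metric limit of the prefractal
boundaries `∂(KS_n)`; it coincides with the closure of the (dense) set of all
prefractal vertices. -/
noncomputable def kochCurve : Set (ℝ × ℝ) := closure kochVertices

namespace KochAux

lemma sqrt3_sq : Real.sqrt 3 * Real.sqrt 3 = 3 := Real.mul_self_sqrt (by norm_num)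
lemma sqrt3_nonneg : 0 ≤ Real.sqrt 3 := Real.sqrt_nonneg 3
lemma sqrt3_le_two : Real.sqrt 3 ≤ 2 := by nlinarith [sqrt3_sq, sqrt3_nonneg]
lemma sqrt3_pos : 0 < Real.sqrt 3 := Real.sqrt_pos.mpr (by norm_num)

/-- right normal -/
def kN (v : ℝ × ℝ) : ℝ × ℝ := (v.2, -v.1)

/-- a compact region containing the whole Koch sub-curve generated by an edge -/
def hull (e : (ℝ × ℝ) × (ℝ × ℝ)) : Set (ℝ × ℝ) :=
  (fun p : ℝ × ℝ => e.1 + p.1 • (e.2 - e.1) + p.2 • kN (e.2 - e.1)) ''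
    (Set.Icc 0 1 ×ˢ Set.Icc 0 (1/2))

lemma mem_hull {e : (ℝ × ℝ) × (ℝ × ℝ)} {x : ℝ × ℝ} :
    x ∈ hull e ↔ ∃ s u : ℝ, 0 ≤ s ∧ s ≤ 1 ∧ 0 ≤ u ∧ u ≤ 1/2 ∧
      x = e.1 + s • (e.2 - e.1) + u • kN (e.2 - e.1) := by
  constructor
  · rintro ⟨⟨s, u⟩, ⟨⟨hs0, hs1⟩, hu0, hu1⟩, rfl⟩
    exact ⟨s, u, hs0, hs1, hu0, hu1, rfl⟩
  · rintro ⟨s, u, hs0, hs1, hu0, hu1, rfl⟩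
    exact ⟨(s, u), ⟨⟨hs0, hs1⟩, hu0, hu1⟩, rfl⟩

lemma hull_step_subset {e e' : (ℝ × ℝ) × (ℝ × ℝ)} (h : e' ∈ kochStep e) :
    hull e' ⊆ hull e := by
  have h2 := sqrt3_le_two
  have h0 := sqrt3_nonneg
  obtain ⟨p, q⟩ := e
  simp only [kochStep, List.mem_cons, List.not_mem_nil, or_false] at h
  intro x hx
  rw [mem_hull] at hx
  obtain ⟨s, u, hs0, hs1, hu0, hu1, rfl⟩ := hx
  rw [mem_hull]
  rcases h with rfl | rfl | rfl | rfl
  · refine ⟨s/3, u/3, by linarith, by linarith, by linarith, by linarith, ?_⟩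
    simp only [kN, kochTip, midpoint_eq_smul_add, Prod.ext_iff, Prod.fst_add, Prod.snd_add,
      Prod.smul_fst, Prod.smul_snd, Prod.fst_sub, Prod.snd_sub, smul_eq_mul, invOf_eq_inv]
    constructor <;> ring
  · refine ⟨1/3 + s/6 - u * Real.sqrt 3 / 6, s * Real.sqrt 3 / 6 + u/6,
      by nlinarith, by nlinarith, by nlinarith, by nlinarith, ?_⟩
    simp only [kN, kochTip, midpoint_eq_smul_add, Prod.ext_iff, Prod.fst_add, Prod.snd_add,
      Prod.smul_fst, Prod.smul_snd, Prod.fst_sub, Prod.snd_sub, smul_eq_mul, invOf_eq_inv]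
    constructor <;> ring
  · refine ⟨1/2 + s/6 + u * Real.sqrt 3 / 6, (1 - s) * Real.sqrt 3 / 6 + u/6,
      by nlinarith, by nlinarith, by nlinarith, by nlinarith, ?_⟩
    simp only [kN, kochTip, midpoint_eq_smul_add, Prod.ext_iff, Prod.fst_add, Prod.snd_add,
      Prod.smul_fst, Prod.smul_snd, Prod.fst_sub, Prod.snd_sub, smul_eq_mul, invOf_eq_inv]
    constructor <;> ring
  · refine ⟨2/3 + s/3, u/3, by linarith, by linarith, by linarith, by linarith, ?_⟩
    simp only [kN, kochTip, midpoint_eq_smul_add, Prod.ext_iff, Prod.fst_add, Prod.snd_add,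
      Prod.smul_fst, Prod.smul_snd, Prod.fst_sub, Prod.snd_sub, smul_eq_mul, invOf_eq_inv]
    constructor <;> ring


/-- left endpoints of the level-`n` Cantor intervals -/
def cLeft : ℕ → Set ℝ
  | 0 => {0}
  | n + 1 => (· / 3) '' cLeft n ∪ (fun x => (2 + x) / 3) '' cLeft n

lemma cLeft_zero : cLeft 0 = {0} := rfl
lemma cLeft_succ (n : ℕ) :
    cLeft (n + 1) = (· / 3) '' cLeft n ∪ (fun x => (2 + x) / 3) '' cLeft n := rfl

lemma div3_mem_cantorSet {x : ℝ} (hx : x ∈ cantorSet) : x / 3 ∈ cantorSet := by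
  rw [cantorSet, Set.mem_iInter] at hx ⊢
  intro n
  cases n with
  | zero =>
    have := hx 0
    simp only [preCantorSet_zero, Set.mem_Icc] at this ⊢
    constructor <;> linarith [this.1, this.2]
  | succ n => exact Or.inl ⟨x, hx n, rfl⟩

lemma add_two_div3_mem_cantorSet {x : ℝ} (hx : x ∈ cantorSet) : (2 + x) / 3 ∈ cantorSet := by
  rw [cantorSet, Set.mem_iInter] at hx ⊢
  intro n
  cases n with
  | zero =>
    have := hx 0
    simp only [preCantorSet_zero, Set.mem_Icc] at this ⊢
    constructor <;> linarith [this.1, this.2]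
  | succ n => exact Or.inr ⟨x, hx n, rfl⟩

lemma one_mem_cantorSet : (1 : ℝ) ∈ cantorSet := by
  rw [cantorSet, Set.mem_iInter]
  intro n
  induction n with
  | zero => simp [preCantorSet]
  | succ n ih => exact Or.inr ⟨1, ih, by norm_num⟩

lemma cLeft_mem_cantorSet {n : ℕ} {a : ℝ} (ha : a ∈ cLeft n) :
    a ∈ cantorSet ∧ a + (3:ℝ)⁻¹ ^ n ∈ cantorSet := by
  induction n generalizing a with
  | zero =>
    rw [cLeft_zero, Set.mem_singleton_iff] at ha
    subst ha
    simpa using ⟨zero_mem_cantorSet, one_mem_cantorSet⟩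
  | succ n ih =>
    rcases ha with ⟨b, hb, rfl⟩ | ⟨b, hb, rfl⟩
    · obtain ⟨h1, h2⟩ := ih hb
      refine ⟨div3_mem_cantorSet h1, ?_⟩
      have : b / 3 + (3:ℝ)⁻¹ ^ (n+1) = (b + (3:ℝ)⁻¹ ^ n) / 3 := by ring
      rw [this]
      exact div3_mem_cantorSet h2
    · obtain ⟨h1, h2⟩ := ih hb
      refine ⟨add_two_div3_mem_cantorSet h1, ?_⟩
      have : (2 + b) / 3 + (3:ℝ)⁻¹ ^ (n+1) = (2 + (b + (3:ℝ)⁻¹ ^ n)) / 3 := by ring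
      rw [this]
      exact add_two_div3_mem_cantorSet h2

lemma cLeft_Icc_subset {n : ℕ} {a : ℝ} (ha : a ∈ cLeft n) :
    Set.Icc a (a + (3:ℝ)⁻¹ ^ n) ⊆ preCantorSet n := by
  induction n generalizing a with
  | zero =>
    rw [cLeft_zero, Set.mem_singleton_iff] at ha
    subst ha
    simp [preCantorSet]
  | succ n ih =>
    rcases ha with ⟨b, hb, rfl⟩ | ⟨b, hb, rfl⟩
    · intro x hx
      refine Or.inl ⟨3 * x, ih hb ⟨by simp at hx ⊢; linarith [hx.1], ?_⟩, by ring⟩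
      simp only [Set.mem_Icc] at hx
      have := hx.2
      rw [show b / 3 + (3:ℝ)⁻¹ ^ (n+1) = (b + (3:ℝ)⁻¹ ^ n) / 3 by ring] at this
      linarith
    · intro x hx
      refine Or.inr ⟨3 * x - 2, ih hb ⟨?_, ?_⟩, by ring⟩
      · simp only [Set.mem_Icc] at hx
        have := hx.1
        linarith
      · simp only [Set.mem_Icc] at hx
        have := hx.2
        rw [show (2 + b) / 3 + (3:ℝ)⁻¹ ^ (n+1) = (2 + (b + (3:ℝ)⁻¹ ^ n)) / 3 by ring] at this
        linarith

lemma exists_cLeft_near {n : ℕ} {t : ℝ} (ht : t ∈ preCantorSet n) :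
    ∃ a ∈ cLeft n, a ≤ t ∧ t ≤ a + (3:ℝ)⁻¹ ^ n := by
  induction n generalizing t with
  | zero =>
    simp only [preCantorSet_zero, Set.mem_Icc] at ht
    exact ⟨0, rfl, by simpa using ht⟩
  | succ n ih =>
    rcases ht with ⟨b, hb, rfl⟩ | ⟨b, hb, rfl⟩
    · obtain ⟨a, ha, h1, h2⟩ := ih hb
      exact ⟨a / 3, Or.inl ⟨a, ha, rfl⟩, by linarith,
        by rw [show a / 3 + (3:ℝ)⁻¹ ^ (n+1) = (a + (3:ℝ)⁻¹ ^ n) / 3 by ring]; linarith⟩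
    · obtain ⟨a, ha, h1, h2⟩ := ih hb
      exact ⟨(2 + a) / 3, Or.inr ⟨a, ha, rfl⟩, by linarith,
        by rw [show (2 + a) / 3 + (3:ℝ)⁻¹ ^ (n+1) = (2 + (a + (3:ℝ)⁻¹ ^ n)) / 3 by ring]; linarith⟩

lemma cLeft_mono {n : ℕ} {a : ℝ} (ha : a ∈ cLeft n) :
    a ∈ cLeft (n + 1) ∧ a + 2 * (3:ℝ)⁻¹ ^ (n + 1) ∈ cLeft (n + 1) := by
  induction n generalizing a with
  | zero =>
    rw [cLeft_zero, Set.mem_singleton_iff] at ha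
    subst ha
    constructor
    · exact Or.inl ⟨0, rfl, by norm_num⟩
    · exact Or.inr ⟨0, rfl, by norm_num⟩
  | succ n ih =>
    rcases ha with ⟨b, hb, rfl⟩ | ⟨b, hb, rfl⟩
    · obtain ⟨h1, h2⟩ := ih hb
      refine ⟨Or.inl ⟨b, h1, rfl⟩, Or.inl ⟨b + 2 * (3:ℝ)⁻¹ ^ (n+1), h2, by ring⟩⟩
    · obtain ⟨h1, h2⟩ := ih hb
      refine ⟨Or.inr ⟨b, h1, rfl⟩, Or.inr ⟨b + 2 * (3:ℝ)⁻¹ ^ (n+1), h2, by ring⟩⟩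


lemma isCompact_hull (e : (ℝ × ℝ) × (ℝ × ℝ)) : IsCompact (hull e) := by
  apply (IsCompact.prod isCompact_Icc isCompact_Icc).image
  fun_prop

/-- existence of edges along Cantor intervals of any initial edge -/
lemma edge_exists : ∀ (n m : ℕ) (p q : ℝ × ℝ), (p, q) ∈ kochEdges m →
    ∀ a ∈ cLeft n,
      (p + a • (q - p), p + (a + (3:ℝ)⁻¹ ^ n) • (q - p)) ∈ kochEdges (m + n) := by
  intro n
  induction n with
  | zero =>
    intro m p q h a ha
    rw [show cLeft 0 = {0} from rfl, Set.mem_singleton_iff] at ha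
    subst ha
    simpa using h
  | succ n ih =>
    intro m p q h a ha
    have hchild1 : (p, p + (3 : ℝ)⁻¹ • (q - p)) ∈ kochEdges (m + 1) := by
      show _ ∈ (kochEdges m).flatMap kochStep
      rw [List.mem_flatMap]
      exact ⟨(p, q), h, by simp [kochStep]⟩
    have hchild4 : (p + (2 / 3 : ℝ) • (q - p), q) ∈ kochEdges (m + 1) := by
      show _ ∈ (kochEdges m).flatMap kochStep
      rw [List.mem_flatMap]
      exact ⟨(p, q), h, by simp [kochStep]⟩
    rcases ha with ⟨b, hb, rfl⟩ | ⟨b, hb, rfl⟩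
    · have := ih (m + 1) p (p + (3 : ℝ)⁻¹ • (q - p)) hchild1 b hb
      have heq : p + (3 : ℝ)⁻¹ • (q - p) - p = (3:ℝ)⁻¹ • (q - p) := by abel
      rw [heq] at this
      rw [show m + (n + 1) = m + 1 + n by ring]
      convert this using 2 <;> simp only [] <;> module
    · have := ih (m + 1) (p + (2 / 3 : ℝ) • (q - p)) q hchild4 b hb
      have heq : q - (p + (2 / 3 : ℝ) • (q - p)) = (3:ℝ)⁻¹ • (q - p) := by module
      rw [heq] at this
      rw [show m + (n + 1) = m + 1 + n by ring]
      convert this using 2 <;> simp only [] <;> module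


lemma fst_mem_hull (e : (ℝ × ℝ) × (ℝ × ℝ)) : e.1 ∈ hull e :=
  ⟨(0, 0), ⟨⟨le_rfl, zero_le_one⟩, le_rfl, by norm_num⟩, by simp⟩

lemma snd_mem_hull (e : (ℝ × ℝ) × (ℝ × ℝ)) : e.2 ∈ hull e :=
  ⟨(1, 0), ⟨⟨zero_le_one, le_rfl⟩, le_rfl, by norm_num⟩, by simp⟩

lemma mem_edges_succ {n : ℕ} {e : (ℝ × ℝ) × (ℝ × ℝ)} (h : e ∈ kochEdges (n + 1)) :
    ∃ e₀ ∈ kochEdges n, e ∈ kochStep e₀ := by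
  rw [show kochEdges (n+1) = (kochEdges n).flatMap kochStep from rfl, List.mem_flatMap] at h
  exact h

lemma descend : ∀ (k n : ℕ) (e : (ℝ × ℝ) × (ℝ × ℝ)), e ∈ kochEdges (n + k) →
    ∃ e₀ ∈ kochEdges n, hull e ⊆ hull e₀ := by
  intro k
  induction k with
  | zero => exact fun n e he => ⟨e, he, subset_rfl⟩
  | succ k ih =>
    intro n e he
    rw [show n + (k + 1) = (n + k) + 1 by ring] at he
    obtain ⟨e₁, he₁, hstep⟩ := mem_edges_succ he
    obtain ⟨e₀, he₀, hsub⟩ := ih n e₁ he₁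
    exact ⟨e₀, he₀, (hull_step_subset hstep).trans hsub⟩

lemma lift : ∀ (k n : ℕ) (e : (ℝ × ℝ) × (ℝ × ℝ)), e ∈ kochEdges n →
    ∃ e' ∈ kochEdges (n + k), e'.1 = e.1 := by
  intro k
  induction k with
  | zero => exact fun n e he => ⟨e, he, rfl⟩
  | succ k ih =>
    intro n e he
    obtain ⟨e', he', h1⟩ := ih n e he
    refine ⟨(e'.1, e'.1 + (3 : ℝ)⁻¹ • (e'.2 - e'.1)), ?_, h1⟩
    rw [show n + (k+1) = (n + k) + 1 by ring,
      show kochEdges ((n+k)+1) = (kochEdges (n+k)).flatMap kochStep from rfl, List.mem_flatMap]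
    exact ⟨e', he', by simp [kochStep]⟩

lemma vertices_subset (n : ℕ) :
    kochVertices ⊆ ⋃ e ∈ {e | e ∈ kochEdges n}, hull e := by
  rintro v ⟨m, e, he, rfl⟩
  rcases le_total m n with h | h
  · obtain ⟨k, rfl⟩ := Nat.exists_eq_add_of_le h
    obtain ⟨e', he', h1⟩ := lift k m e he
    exact Set.mem_biUnion he' (h1 ▸ fst_mem_hull e')
  · obtain ⟨k, rfl⟩ := Nat.exists_eq_add_of_le h
    obtain ⟨e₀, he₀, hsub⟩ := descend k n e he
    exact Set.mem_biUnion he₀ (hsub (fst_mem_hull e))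

lemma curve_subset (n : ℕ) :
    kochCurve ⊆ ⋃ e ∈ {e | e ∈ kochEdges n}, hull e := by
  apply closure_minimal (vertices_subset n)
  exact Set.Finite.isClosed_biUnion (kochEdges n).finite_toSet
    (fun e _ => (isCompact_hull e).isClosed)


lemma seg_indep {P Q : ℝ × ℝ} (hv : Q - P ≠ 0) {α β : ℝ}
    (h : P + α • (Q - P) + β • kN (Q - P) ∈ segment ℝ P Q) :
    β = 0 ∧ 0 ≤ α ∧ α ≤ 1 := by
  rw [segment_eq_image'] at h
  obtain ⟨θ, ⟨hθ0, hθ1⟩, hx⟩ := h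
  set v := Q - P with hvdef
  have h1 := congrArg Prod.fst hx
  have h2 := congrArg Prod.snd hx
  simp only [kN, Prod.fst_add, Prod.snd_add, Prod.smul_fst, Prod.smul_snd, smul_eq_mul] at h1 h2
  have hvv : 0 < v.1 ^ 2 + v.2 ^ 2 := by
    have : v.1 ≠ 0 ∨ v.2 ≠ 0 := by
      by_contra hc
      push_neg at hc
      exact hv (Prod.ext hc.1 hc.2)
    rcases this with h' | h' <;>
      nlinarith [sq_nonneg v.1, sq_nonneg v.2, sq_pos_of_ne_zero h']
  have e1 : (α - θ) * v.1 + β * v.2 = 0 := by linarith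
  have e2 : (α - θ) * v.2 - β * v.1 = 0 := by linarith
  have key1 : β * (v.1 ^ 2 + v.2 ^ 2) = 0 := by linear_combination v.2 * e1 - v.1 * e2
  have key2 : (α - θ) * (v.1 ^ 2 + v.2 ^ 2) = 0 := by linear_combination v.1 * e1 + v.2 * e2
  have hβ : β = 0 := by
    rcases mul_eq_zero.mp key1 with h | h
    · exact h
    · exact absurd h hvv.ne'
  have hα : α = θ := by
    rcases mul_eq_zero.mp key2 with h | h
    · linarith
    · exact absurd h hvv.ne'
  exact ⟨hβ, hα ▸ hθ0, hα ▸ hθ1⟩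

def good (P Q : ℝ × ℝ) (n : ℕ) (e : (ℝ × ℝ) × (ℝ × ℝ)) : Prop :=
  (∃ a ∈ cLeft n, e.1 = P + a • (Q - P) ∧ e.2 = P + (a + (3:ℝ)⁻¹ ^ n) • (Q - P)) ∨
  (hull e ∩ segment ℝ P Q ⊆ (fun t : ℝ => P + t • (Q - P)) '' cantorSet)

lemma kN_smul (c : ℝ) (v : ℝ × ℝ) : kN (c • v) = c • kN v := by
  simp [kN, Prod.ext_iff, smul_eq_mul, mul_comm]

lemma good_step {P Q : ℝ × ℝ} (hv : Q - P ≠ 0) {n : ℕ} {e e' : (ℝ × ℝ) × (ℝ × ℝ)}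
    (hg : good P Q n e) (h : e' ∈ kochStep e) : good P Q (n + 1) e' := by
  rcases hg with ⟨a, ha, h1, h2⟩ | hsub
  · -- the collinear case
    set v := Q - P with hvdef
    set w : ℝ := (3:ℝ)⁻¹ ^ n with hwdef
    have hw0 : 0 < w := by positivity
    have hd : e.2 - e.1 = w • v := by rw [h1, h2]; module
    simp only [kochStep, List.mem_cons, List.not_mem_nil, or_false] at h
    rcases h with rfl | rfl | rfl | rfl
    · left
      refine ⟨a, (cLeft_mono ha).1, h1, ?_⟩
      dsimp only
      rw [hd, h1]
      module
    · right
      rintro x ⟨hx, hxseg⟩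
      rw [mem_hull] at hx
      obtain ⟨s, u, hs0, hs1, hu0, hu1, rfl⟩ := hx
      dsimp only at hxseg ⊢
      have hrep : e.1 + (3:ℝ)⁻¹ • (e.2 - e.1) +
            s • (kochTip e.1 e.2 - (e.1 + (3:ℝ)⁻¹ • (e.2 - e.1))) +
            u • kN (kochTip e.1 e.2 - (e.1 + (3:ℝ)⁻¹ • (e.2 - e.1))) =
          P + (a + w * (1/3 + s/6 - u * Real.sqrt 3 / 6)) • v +
            (w * (s * Real.sqrt 3 / 6 + u / 6)) • kN v := by
        rw [h1, h2]
        simp only [kochTip, kN, midpoint_eq_smul_add, Prod.ext_iff, Prod.fst_add, Prod.snd_add,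
          Prod.smul_fst, Prod.smul_snd, Prod.fst_sub, Prod.snd_sub, smul_eq_mul, invOf_eq_inv]
        constructor <;> ring
      rw [hrep] at hxseg ⊢
      obtain ⟨hβ, -, -⟩ := seg_indep hv hxseg
      have hsum : s * Real.sqrt 3 / 6 + u / 6 = 0 := by
        rcases mul_eq_zero.mp hβ with h' | h'
        · exact absurd h' hw0.ne'
        · exact h'
      have hs : s = 0 ∧ u = 0 := by
        have := mul_nonneg hs0 sqrt3_pos.le
        constructor <;> nlinarith [sqrt3_pos]
      obtain ⟨rfl, rfl⟩ := hs
      refine ⟨a + (3:ℝ)⁻¹ ^ (n+1), (cLeft_mem_cantorSet (cLeft_mono ha).1).2, ?_⟩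
      dsimp only
      rw [hwdef]
      module
    · right
      rintro x ⟨hx, hxseg⟩
      rw [mem_hull] at hx
      obtain ⟨s, u, hs0, hs1, hu0, hu1, rfl⟩ := hx
      dsimp only at hxseg ⊢
      have hrep : kochTip e.1 e.2 +
            s • (e.1 + (2/3 : ℝ) • (e.2 - e.1) - kochTip e.1 e.2) +
            u • kN (e.1 + (2/3 : ℝ) • (e.2 - e.1) - kochTip e.1 e.2) =
          P + (a + w * (1/2 + s/6 + u * Real.sqrt 3 / 6)) • v +
            (w * ((1 - s) * Real.sqrt 3 / 6 + u / 6)) • kN v := by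
        rw [h1, h2]
        simp only [kochTip, kN, midpoint_eq_smul_add, Prod.ext_iff, Prod.fst_add, Prod.snd_add,
          Prod.smul_fst, Prod.smul_snd, Prod.fst_sub, Prod.snd_sub, smul_eq_mul, invOf_eq_inv]
        constructor <;> ring
      rw [hrep] at hxseg ⊢
      obtain ⟨hβ, -, -⟩ := seg_indep hv hxseg
      have hsum : (1 - s) * Real.sqrt 3 / 6 + u / 6 = 0 := by
        rcases mul_eq_zero.mp hβ with h' | h'
        · exact absurd h' hw0.ne'
        · exact h'
      have hs : s = 1 ∧ u = 0 := by
        have := mul_nonneg (by linarith : (0:ℝ) ≤ 1 - s) sqrt3_pos.le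
        constructor <;> nlinarith [sqrt3_pos]
      obtain ⟨rfl, rfl⟩ := hs
      refine ⟨a + 2 * (3:ℝ)⁻¹ ^ (n+1), (cLeft_mem_cantorSet (cLeft_mono ha).2).1, ?_⟩
      dsimp only
      rw [hwdef]
      module
    · left
      refine ⟨a + 2 * (3:ℝ)⁻¹ ^ (n+1), (cLeft_mono ha).2, ?_, ?_⟩
      · dsimp only; rw [hd, h1, hwdef]; module
      · dsimp only; rw [h2, hwdef]; module
  · right
    exact fun x hx => hsub ⟨hull_step_subset h hx.1, hx.2⟩


lemma good_all {P Q : ℝ × ℝ} (hv : Q - P ≠ 0)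
    (base : ∀ e ∈ kochEdges 0, good P Q 0 e) :
    ∀ n, ∀ e ∈ kochEdges n, good P Q n e := by
  intro n
  induction n with
  | zero => exact base
  | succ n ih =>
    intro e he
    obtain ⟨e₀, he₀, hstep⟩ := mem_edges_succ he
    exact good_step hv (ih e₀ he₀) hstep

lemma side_eq {P Q : ℝ × ℝ} (hv : Q - P ≠ 0) (h0 : (P, Q) ∈ kochEdges 0)
    (base : ∀ e ∈ kochEdges 0, good P Q 0 e) :
    kochCurve ∩ segment ℝ P Q = (fun t : ℝ => P + t • (Q - P)) '' cantorSet := by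
  apply Set.Subset.antisymm
  · rintro x ⟨hxc, hxseg⟩
    have key : ∀ n, ∃ t ∈ preCantorSet n, x = P + t • (Q - P) := by
      intro n
      obtain ⟨e, he, hxe⟩ : ∃ e ∈ kochEdges n, x ∈ hull e := by
        have := curve_subset n hxc
        simpa using this
      rcases good_all hv base n e he with ⟨a, ha, h1, h2⟩ | hsub
      · rw [mem_hull] at hxe
        obtain ⟨s, u, hs0, hs1, hu0, hu1, rfl⟩ := hxe
        have hw0 : (0:ℝ) < (3:ℝ)⁻¹ ^ n := by positivity
        have hrep : e.1 + s • (e.2 - e.1) + u • kN (e.2 - e.1) =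
            P + (a + s * (3:ℝ)⁻¹ ^ n) • (Q - P) + (u * (3:ℝ)⁻¹ ^ n) • kN (Q - P) := by
          have hd : e.2 - e.1 = ((3:ℝ)⁻¹ ^ n) • (Q - P) := by rw [h1, h2]; module
          rw [hd, h1, kN_smul]
          module
        rw [hrep] at hxseg ⊢
        obtain ⟨hβ, -, -⟩ := seg_indep hv hxseg
        refine ⟨a + s * (3:ℝ)⁻¹ ^ n, cLeft_Icc_subset ha ⟨?_, ?_⟩, ?_⟩
        · nlinarith [mul_nonneg hs0 hw0.le]
        · linarith [mul_le_of_le_one_left hw0.le hs1]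
        · rw [hβ, zero_smul, add_zero]
      · obtain ⟨t, ht, hxt⟩ := hsub ⟨hxe, hxseg⟩
        exact ⟨t, Set.mem_iInter.mp ht n, hxt.symm⟩
    obtain ⟨t0, _, hx0⟩ := key 0
    have htc : t0 ∈ cantorSet := by
      rw [cantorSet, Set.mem_iInter]
      intro n
      obtain ⟨t, ht, hx⟩ := key n
      have heq : P + t • (Q - P) = P + t0 • (Q - P) := by rw [← hx, ← hx0]
      have : t = t0 := smul_left_injective ℝ hv (add_left_cancel heq)
      rwa [← this]
    exact ⟨t0, htc, hx0.symm⟩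
  · rintro x ⟨t, ht, rfl⟩
    have ht01 : t ∈ Set.Icc (0:ℝ) 1 := cantorSet_subset_unitInterval ht
    constructor
    · rw [kochCurve, Metric.mem_closure_iff]
      intro ε hε
      have hQP : (0:ℝ) < ‖Q - P‖ := norm_pos_iff.mpr hv
      obtain ⟨n, hn⟩ : ∃ n : ℕ, ((3:ℝ)⁻¹) ^ n < ε / ‖Q - P‖ :=
        exists_pow_lt_of_lt_one (by positivity) (by norm_num)
      have htn : t ∈ preCantorSet n := Set.mem_iInter.mp ht n
      obtain ⟨a, ha, ha1, ha2⟩ := exists_cLeft_near htn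
      refine ⟨P + a • (Q - P), ⟨0 + n,
        (P + a • (Q - P), P + (a + (3:ℝ)⁻¹ ^ n) • (Q - P)),
        edge_exists n 0 P Q h0 a ha, rfl⟩, ?_⟩
      rw [dist_eq_norm]
      have hsub : P + t • (Q - P) - (P + a • (Q - P)) = (t - a) • (Q - P) := by module
      rw [hsub, norm_smul]
      have habs : |t - a| ≤ (3:ℝ)⁻¹ ^ n := by
        rw [abs_le]
        constructor <;> linarith
      calc |t - a| * ‖Q - P‖ ≤ (3:ℝ)⁻¹ ^ n * ‖Q - P‖ := by
            exact mul_le_mul_of_nonneg_right (by simpa [Real.norm_eq_abs] using habs) hQP.le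
        _ < (ε / ‖Q - P‖) * ‖Q - P‖ := by exact mul_lt_mul_of_pos_right hn hQP
        _ = ε := by field_simp
    · rw [segment_eq_image']
      exact ⟨t, ht01, rfl⟩


end KochAux


open KochAux

/-- **The snowflake boundary meets each side of `Δ` in a middle-third Cantor set.**
The intersection of the Koch snowflake curve with the boundary of the initial
equilateral triangle `Δ` (of unit side, with vertices `A = (0,0)`, `B = (1,0)`,
`C = (1/2, √3/2)`) is the union of three homeomorphic copies of the middle-third
Cantor set, one on each side of `Δ`: on each unit side, the set of points of the
snowflake curve lying on that side is exactly the image of the standard middle-third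
Cantor set `cantorSet ⊆ [0,1]` under the affine parametrization of that side. -/
theorem kochCurve_inter_triangle_side_eq_cantorSet
    (A B C : ℝ × ℝ) (hA : A = ((0 : ℝ), (0 : ℝ))) (hB : B = ((1 : ℝ), (0 : ℝ)))
    (hC : C = ((1 / 2 : ℝ), Real.sqrt 3 / 2)) :
    kochCurve ∩ segment ℝ A B = (fun t : ℝ => A + t • (B - A)) '' cantorSet ∧
    kochCurve ∩ segment ℝ B C = (fun t : ℝ => B + t • (C - B)) '' cantorSet ∧
    kochCurve ∩ segment ℝ C A = (fun t : ℝ => C + t • (A - C)) '' cantorSet ∧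
    kochCurve ∩ (segment ℝ A B ∪ segment ℝ B C ∪ segment ℝ C A) =
      (fun t : ℝ => A + t • (B - A)) '' cantorSet ∪
      (fun t : ℝ => B + t • (C - B)) '' cantorSet ∪
      (fun t : ℝ => C + t • (A - C)) '' cantorSet := by
  subst hA hB hC
  have sq3 := sqrt3_pos
  have sq3n := sqrt3_pos.le
  have hmem0 : ∀ e : (ℝ × ℝ) × (ℝ × ℝ), e ∈ kochEdges 0 ↔
      e = (((0 : ℝ), (0 : ℝ)), ((1 : ℝ), (0 : ℝ))) ∨
      e = (((1 : ℝ), (0 : ℝ)), ((1 / 2 : ℝ), Real.sqrt 3 / 2)) ∨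
      e = (((1 / 2 : ℝ), Real.sqrt 3 / 2), ((0 : ℝ), (0 : ℝ))) := by
    intro e
    show e ∈ [_, _, _] ↔ _
    simp
  have hzero : (0 : ℝ) ∈ cLeft 0 := rfl
  -- a generic helper to analyse hull-members lying on a segment
  have main : ∀ P Q : ℝ × ℝ, Q - P ≠ 0 → (P, Q) ∈ kochEdges 0 →
      (∀ e ∈ kochEdges 0, good P Q 0 e) →
      kochCurve ∩ segment ℝ P Q = (fun t : ℝ => P + t • (Q - P)) '' cantorSet :=
    fun P Q hv h0 base => side_eq hv h0 base
  have hAB : kochCurve ∩ segment ℝ ((0 : ℝ), (0 : ℝ)) ((1 : ℝ), (0 : ℝ)) =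
      (fun t : ℝ => ((0 : ℝ), (0 : ℝ)) + t • (((1 : ℝ), (0 : ℝ)) - ((0 : ℝ), (0 : ℝ)))) '' cantorSet := by
    apply main
    · simp [Prod.ext_iff]
    · rw [hmem0]; tauto
    · intro e he
      rw [hmem0] at he
      rcases he with rfl | rfl | rfl
      · -- own edge
        exact Or.inl ⟨0, hzero, by norm_num [Prod.ext_iff], by norm_num [Prod.ext_iff]⟩
      · -- edge B→C
        right
        rintro x ⟨hx, hxseg⟩
        rw [mem_hull] at hx
        obtain ⟨s, u, hs0, hs1, hu0, hu1, rfl⟩ := hx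
        rw [segment_eq_image'] at hxseg
        obtain ⟨θ, ⟨hθ0, hθ1⟩, hxe⟩ := hxseg
        have hc2 := congrArg Prod.snd hxe
        simp only [kN, Prod.fst_add, Prod.snd_add, Prod.smul_fst, Prod.smul_snd,
          Prod.fst_sub, Prod.snd_sub, smul_eq_mul] at hc2
        norm_num at hc2
        have hθv : θ = 1 := by
          have h1 := congrArg Prod.fst hxe
          simp only [kN, Prod.fst_add, Prod.snd_add, Prod.smul_fst, Prod.smul_snd,
            Prod.fst_sub, Prod.snd_sub, smul_eq_mul] at h1
          norm_num at h1
          nlinarith [mul_nonneg hs0 sq3n, mul_nonneg hu0 sq3n]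
        exact ⟨θ, by rw [hθv]; exact one_mem_cantorSet, hxe⟩
      · -- edge C→A
        right
        rintro x ⟨hx, hxseg⟩
        rw [mem_hull] at hx
        obtain ⟨s, u, hs0, hs1, hu0, hu1, rfl⟩ := hx
        rw [segment_eq_image'] at hxseg
        obtain ⟨θ, ⟨hθ0, hθ1⟩, hxe⟩ := hxseg
        have hθv : θ = 0 := by
          have h1 := congrArg Prod.fst hxe
          have h2 := congrArg Prod.snd hxe
          simp only [kN, Prod.fst_add, Prod.snd_add, Prod.smul_fst, Prod.smul_snd,
            Prod.fst_sub, Prod.snd_sub, smul_eq_mul] at h1 h2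
          norm_num at h1 h2
          nlinarith [mul_nonneg (by linarith : (0:ℝ) ≤ 1 - s) sq3n, mul_nonneg hu0 sq3n]
        exact ⟨θ, by rw [hθv]; exact zero_mem_cantorSet, hxe⟩
  have hBC : kochCurve ∩ segment ℝ ((1 : ℝ), (0 : ℝ)) ((1 / 2 : ℝ), Real.sqrt 3 / 2) =
      (fun t : ℝ => ((1 : ℝ), (0 : ℝ)) + t • (((1 / 2 : ℝ), Real.sqrt 3 / 2) - ((1 : ℝ), (0 : ℝ)))) '' cantorSet := by
    apply main
    · simp only [Prod.ext_iff, Prod.fst_sub, Prod.snd_sub, ne_eq, Prod.mk.injEq, not_and]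
      intro _
      norm_num [sq3.ne']
    · rw [hmem0]; tauto
    · intro e he
      rw [hmem0] at he
      rcases he with rfl | rfl | rfl
      · -- edge A→B
        right
        rintro x ⟨hx, hxseg⟩
        rw [mem_hull] at hx
        obtain ⟨s, u, hs0, hs1, hu0, hu1, rfl⟩ := hx
        rw [segment_eq_image'] at hxseg
        obtain ⟨θ, ⟨hθ0, hθ1⟩, hxe⟩ := hxseg
        have hθv : θ = 0 := by
          have h2 := congrArg Prod.snd hxe
          simp only [kN, Prod.fst_add, Prod.snd_add, Prod.smul_fst, Prod.smul_snd,
            Prod.fst_sub, Prod.snd_sub, smul_eq_mul] at h2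
          norm_num at h2
          nlinarith [mul_nonneg hθ0 sq3n]
        exact ⟨θ, by rw [hθv]; exact zero_mem_cantorSet, hxe⟩
      · -- own edge
        exact Or.inl ⟨0, hzero, by norm_num [Prod.ext_iff], by norm_num [Prod.ext_iff]⟩
      · -- edge C→A
        right
        rintro x ⟨hx, hxseg⟩
        rw [mem_hull] at hx
        obtain ⟨s, u, hs0, hs1, hu0, hu1, rfl⟩ := hx
        rw [segment_eq_image'] at hxseg
        obtain ⟨θ, ⟨hθ0, hθ1⟩, hxe⟩ := hxseg
        have hθv : θ = 1 := by
          have h1 := congrArg Prod.fst hxe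
          have h2 := congrArg Prod.snd hxe
          simp only [kN, Prod.fst_add, Prod.snd_add, Prod.smul_fst, Prod.smul_snd,
            Prod.fst_sub, Prod.snd_sub, smul_eq_mul] at h1 h2
          norm_num at h1 h2
          nlinarith [mul_nonneg hu0 sq3n, mul_nonneg hs0 sq3n]
        exact ⟨θ, by rw [hθv]; exact one_mem_cantorSet, hxe⟩
  have hCA : kochCurve ∩ segment ℝ ((1 / 2 : ℝ), Real.sqrt 3 / 2) ((0 : ℝ), (0 : ℝ)) =
      (fun t : ℝ => ((1 / 2 : ℝ), Real.sqrt 3 / 2) + t • (((0 : ℝ), (0 : ℝ)) - ((1 / 2 : ℝ), Real.sqrt 3 / 2))) '' cantorSet := by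
    apply main
    · simp only [Prod.ext_iff, Prod.fst_sub, Prod.snd_sub, ne_eq, Prod.mk.injEq, not_and]
      intro _
      norm_num [sq3.ne']
    · rw [hmem0]; tauto
    · intro e he
      rw [hmem0] at he
      rcases he with rfl | rfl | rfl
      · -- edge A→B
        right
        rintro x ⟨hx, hxseg⟩
        rw [mem_hull] at hx
        obtain ⟨s, u, hs0, hs1, hu0, hu1, rfl⟩ := hx
        rw [segment_eq_image'] at hxseg
        obtain ⟨θ, ⟨hθ0, hθ1⟩, hxe⟩ := hxseg
        have hθv : θ = 1 := by
          have h2 := congrArg Prod.snd hxe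
          simp only [kN, Prod.fst_add, Prod.snd_add, Prod.smul_fst, Prod.smul_snd,
            Prod.fst_sub, Prod.snd_sub, smul_eq_mul] at h2
          norm_num at h2
          nlinarith [mul_nonneg (by linarith : (0:ℝ) ≤ 1 - θ) sq3n]
        exact ⟨θ, by rw [hθv]; exact one_mem_cantorSet, hxe⟩
      · -- edge B→C
        right
        rintro x ⟨hx, hxseg⟩
        rw [mem_hull] at hx
        obtain ⟨s, u, hs0, hs1, hu0, hu1, rfl⟩ := hx
        rw [segment_eq_image'] at hxseg
        obtain ⟨θ, ⟨hθ0, hθ1⟩, hxe⟩ := hxseg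
        have hθv : θ = 0 := by
          have h1 := congrArg Prod.fst hxe
          have h2 := congrArg Prod.snd hxe
          simp only [kN, Prod.fst_add, Prod.snd_add, Prod.smul_fst, Prod.smul_snd,
            Prod.fst_sub, Prod.snd_sub, smul_eq_mul] at h1 h2
          norm_num at h1 h2
          nlinarith [mul_nonneg hu0 sq3n, mul_nonneg hθ0 sq3n]
        exact ⟨θ, by rw [hθv]; exact zero_mem_cantorSet, hxe⟩
      · -- own edge
        exact Or.inl ⟨0, hzero, by norm_num [Prod.ext_iff], by norm_num [Prod.ext_iff]⟩
  refine ⟨hAB, hBC, hCA, ?_⟩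
  rw [Set.inter_union_distrib_left, Set.inter_union_distrib_left, hAB, hBC, hCA]
end
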